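/- arXiv:1903.04301 — 2 statements merged into one kernel-verified Lean document; each statement's English description precedes it below -/
import Mathlib

section
/- Let (Ω,Σ,μ) be a saturated complete finite measure space and E a separable Banach space. Then for every nonempty decomposable subset K of L¹(μ,E), the set {∫ f dμ : f ∈ K} is a convex subset of E. -/
open MeasureTheory TopologicalSpace
open scoped Classical

noncomputable section

/-- A subset `K` of `L¹(μ,E)` is *decomposable* if for all `f, g ∈ K` and every measurable
set `A`, the function `χ_A f + (1 - χ_A) g` (equal to `f` on `A` and to `g` off `A`)
belongs to `K`. -/
def Decomposable {Ω E : Type*} [MeasurableSpace Ω] [NormedAddCommGroup E]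
    (μ : Measure Ω) (K : Set (Lp E 1 μ)) : Prop :=
  ∀ f ∈ K, ∀ g ∈ K, ∀ A : Set Ω, MeasurableSet A →
    ∀ h : Lp E 1 μ, (h : Ω → E) =ᵐ[μ] A.piecewise (f : Ω → E) (g : Ω → E) → h ∈ K

/-- A finite measure space is *saturated* if for every measurable set `S` of positive
measure, the space `L¹` of real-valued integrable functions with respect to the measure
restricted to `S` is not separable. -/
def Saturated {Ω : Type*} [MeasurableSpace Ω] (μ : Measure Ω) : Prop :=
  ∀ S : Set Ω, MeasurableSet S → 0 < μ S →
    ¬ TopologicalSpace.SeparableSpace (Lp ℝ 1 (μ.restrict S))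


open Set
open scoped symmDiff ENNReal

namespace SatAux

variable {Ω : Type*} {m0 : MeasurableSpace Ω} {μ : Measure Ω} [IsFiniteMeasure μ]

def indR (A : Set Ω) : Ω → ℝ := A.indicator (fun _ => (1:ℝ))

end SatAux

section MSet
variable {Ω : Type*} {m : MeasurableSpace Ω}

lemma msetLT {f g : Ω → ℝ} (hf : Measurable f) (hg : Measurable g) :
    MeasurableSet {x | f x < g x} := measurableSet_lt hf hg

lemma msetLE {f g : Ω → ℝ} (hf : Measurable f) (hg : Measurable g) :
    MeasurableSet {x | f x ≤ g x} := measurableSet_le hf hg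

end MSet

namespace SatAux
variable {Ω : Type*} {m0 : MeasurableSpace Ω} {μ : Measure Ω} [IsFiniteMeasure μ]

lemma exists_non_m_set {m : MeasurableSpace Ω} (hm : m ≤ m0)
    (hcg : @MeasurableSpace.CountablyGenerated Ω m)
    (hsat : @Saturated Ω m0 μ) {S : Set Ω} (hS : MeasurableSet[m0] S) (hS0 : 0 < μ S) :
    ∃ D, MeasurableSet[m0] D ∧ D ⊆ S ∧ ∀ B, MeasurableSet[m] B → μ.restrict S (D ∆ B) ≠ 0 := by
  by_contra hcon
  push_neg at hcon
  set ν : @Measure Ω m := @Measure.trim Ω m m0 (μ.restrict S) hm with hν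
  haveI := hcg
  haveI hfin : @IsFiniteMeasure Ω m ν := isFiniteMeasure_trim hm
  have hsep : @MeasureTheory.IsSeparable Ω m ν := isSeparable_of_sigmaFinite ν
  obtain ⟨𝒜, h𝒜c, h𝒜d⟩ := @exists_countable_measureDense Ω m ν hsep
  -- build a measure-dense family for μ.restrict S
  have hSc : μ.restrict S Sᶜ = 0 := by
    rw [Measure.restrict_apply' hS]
    simp
  have hmeas : ∀ s ∈ 𝒜, MeasurableSet[m0] s := fun s hs => hm s (h𝒜d.measurable s hs)
  have happrox : ∀ s, MeasurableSet[m0] s → μ.restrict S s ≠ ⊤ → ∀ ε:ℝ, 0 < ε →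
      ∃ t ∈ 𝒜, μ.restrict S (s ∆ t) < ENNReal.ofReal ε := by
    intro s hs _ ε hε
    obtain ⟨B, hB, hDB⟩ := hcon (s ∩ S) (hs.inter hS) inter_subset_right
    obtain ⟨t, ht, hνt⟩ := h𝒜d.approx B hB (by
      exact (@measure_lt_top Ω m ν hfin B).ne) ε hε
    refine ⟨t, ht, ?_⟩
    have h1 : μ.restrict S (s ∆ (s ∩ S)) = 0 := by
      refine measure_mono_null ?_ hSc
      intro x hx
      rcases hx with ⟨hx1, hx2⟩ | ⟨hx1, hx2⟩
      · exact fun hxS => hx2 ⟨hx1, hxS⟩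
      · exact absurd hx1.1 hx2
    have h3 : μ.restrict S (B ∆ t) = ν (B ∆ t) := by
      rw [hν, trim_measurableSet_eq hm (hB.symmDiff (h𝒜d.measurable t ht))]
    calc μ.restrict S (s ∆ t) ≤ μ.restrict S (s ∆ B) + μ.restrict S (B ∆ t) :=
          measure_symmDiff_le _ _ _
      _ ≤ (μ.restrict S (s ∆ (s ∩ S)) + μ.restrict S ((s ∩ S) ∆ B)) + μ.restrict S (B ∆ t) :=
          add_le_add_left (measure_symmDiff_le _ _ _) _
      _ = ν (B ∆ t) := by rw [h1, hDB, h3]; simp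
      _ < ENNReal.ofReal ε := hνt
  have hdense : @Measure.MeasureDense Ω m0 (μ.restrict S) 𝒜 := @Measure.MeasureDense.mk Ω m0 (μ.restrict S) 𝒜 hmeas happrox
  haveI : @MeasureTheory.IsSeparable Ω m0 (μ.restrict S) := @MeasureTheory.IsSeparable.mk Ω m0 (μ.restrict S) ⟨𝒜, h𝒜c, hdense⟩
  haveI : Fact ((1:ℝ≥0∞) ≤ 1) := ⟨le_rfl⟩
  haveI : Fact ((1:ℝ≥0∞) ≠ ∞) := ⟨ENNReal.one_ne_top⟩
  exact hsat S hS hS0 inferInstance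

lemma integrable_indR {A : Set Ω} (hA : MeasurableSet A) : Integrable (indR A) μ :=
  (integrable_const (1:ℝ)).indicator hA

lemma setIntegral_indR {A C : Set Ω} (hA : MeasurableSet A) (hC : MeasurableSet C) :
    ∫ x in C, indR A x ∂μ = (μ (A ∩ C)).toReal := by
  rw [indR, setIntegral_indicator hA, setIntegral_const, inter_comm, smul_eq_mul, mul_one, measureReal_def]

lemma setIntegral_condexp_indR {m : MeasurableSpace Ω} (hm : m ≤ m0) {A C : Set Ω}
    (hA : MeasurableSet[m0] A) (hC : MeasurableSet[m] C) :
    ∫ x in C, (μ[indR A|m]) x ∂μ = (μ (A ∩ C)).toReal := by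
  rw [setIntegral_condExp hm (integrable_indR hA) hC, setIntegral_indR hA (hm C hC)]

lemma condexp_indR_nonneg {m : MeasurableSpace Ω} {A : Set Ω} :
    0 ≤ᵐ[μ] μ[indR A|m] :=
  condExp_nonneg (Filter.Eventually.of_forall fun x =>
    Set.indicator_nonneg (fun _ _ => zero_le_one) x)

lemma measure_eq_zero_of_setIntegral_le {g : Ω → ℝ} {C : Set Ω} {c : ℝ}
    (hgi : Integrable g μ) (hC : MeasurableSet C) (hlt : ∀ x ∈ C, c < g x)
    (hle : ∫ x in C, g x ∂μ ≤ c * (μ C).toReal) : μ C = 0 := by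
  have hnn : 0 ≤ᵐ[μ.restrict C] fun x => g x - c := by
    filter_upwards [ae_restrict_mem hC] with x hx
    exact sub_nonneg.2 (hlt x hx).le
  have hint : Integrable (fun x => g x - c) (μ.restrict C) :=
    hgi.integrableOn.sub (integrableOn_const (measure_ne_top _ _))
  have hz : ∫ x in C, (g x - c) ∂μ = 0 := by
    have h1 : ∫ x in C, (g x - c) ∂μ = (∫ x in C, g x ∂μ) - c * (μ C).toReal := by
      rw [integral_sub hgi.integrableOn (integrableOn_const (measure_ne_top _ _))]
      simp [mul_comm, measureReal_def]
    have h2 : 0 ≤ ∫ x in C, (g x - c) ∂μ := integral_nonneg_of_ae hnn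
    linarith
  have hae := (setIntegral_eq_zero_iff_of_nonneg_ae hnn hint).1 hz
  have hfalse : ∀ᵐ x ∂μ.restrict C, False := by
    filter_upwards [hae, ae_restrict_mem hC] with x hx1 hx2
    have := hlt x hx2
    simp only [Pi.zero_apply] at hx1
    linarith
  have h0 : μ.restrict C Set.univ = 0 := by
    simpa using ae_iff.1 hfalse
  simpa using h0

/-- The splitting lemma: inside any positive-measure set there is a positive-measure subset
whose conditional "density" w.r.t. `m` is at most half of that of the big set. -/
lemma exists_half_split {m : MeasurableSpace Ω} (hm : m ≤ m0)
    (hcg : @MeasurableSpace.CountablyGenerated Ω m)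
    (hsat : @Saturated Ω m0 μ) {S : Set Ω} (hS : MeasurableSet[m0] S) (hS0 : 0 < μ S) :
    ∃ B, MeasurableSet[m0] B ∧ B ⊆ S ∧ 0 < μ B ∧
      μ[indR B|m] ≤ᵐ[μ] fun x => (1/2) * (μ[indR S|m]) x := by
  obtain ⟨D, hD, hDS, hDne⟩ := exists_non_m_set hm hcg hsat hS hS0
  set h : Ω → ℝ := μ[indR D|m] with hh
  set hSf : Ω → ℝ := μ[indR S|m] with hhSf
  have hmeas : StronglyMeasurable[m] h := stronglyMeasurable_condExp
  have hSmeas : StronglyMeasurable[m] hSf := stronglyMeasurable_condExp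
  have h_nonneg : 0 ≤ᵐ[μ] h := condexp_indR_nonneg
  have hS_nonneg : 0 ≤ᵐ[μ] hSf := condexp_indR_nonneg
  have h_le : h ≤ᵐ[μ] hSf := by
    refine condExp_mono (integrable_indR hD) (integrable_indR hS) ?_
    exact Filter.Eventually.of_forall fun x =>
      Set.indicator_le_indicator_of_subset hDS (fun _ => zero_le_one) x
  set G : Set Ω := {x | 0 < h x ∧ h x < hSf x} with hG
  have hGm : MeasurableSet[m] G := by
    have h1 : MeasurableSet[m] {x | (fun _ => (0:ℝ)) x < h x} :=
      msetLT (@measurable_const ℝ Ω _ m 0) hmeas.measurable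
    have h2 : MeasurableSet[m] {x | h x < hSf x} := msetLT hmeas.measurable hSmeas.measurable
    exact MeasurableSet.inter h1 h2
  by_cases hGz : μ G = 0
  · -- D would agree a.e. on S with the m-set B = {hSf ≤ h}; contradiction
    exfalso
    set B : Set Ω := {x | hSf x ≤ h x} with hB
    have hBm : MeasurableSet[m] B := msetLE hSmeas.measurable hmeas.measurable
    have hae : ∀ᵐ x ∂μ, h x = 0 ∨ h x = hSf x := by
      have hGae : ∀ᵐ x ∂μ, x ∉ G := by
        rw [← compl_mem_ae_iff] at hGz; exact hGz
      filter_upwards [hGae, h_nonneg, h_le] with x hx h0 h1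
      simp only [hG, mem_setOf_eq, not_and_or, not_lt] at hx
      rcases hx with hx | hx
      · exact Or.inl (le_antisymm hx h0)
      · exact Or.inr (le_antisymm h1 hx)
    -- part 1 : μ (D \ B) = 0
    have part1 : μ (D \ B) = 0 := by
      have hcalc : (μ (D ∩ Bᶜ)).toReal = ∫ x in Bᶜ, h x ∂μ :=
        (setIntegral_condexp_indR hm hD hBm.compl).symm
      have hz : ∫ x in Bᶜ, h x ∂μ = 0 := by
        have : h =ᵐ[μ.restrict Bᶜ] 0 := by
          filter_upwards [ae_restrict_of_ae hae, ae_restrict_mem (hm _ hBm.compl)] with x hx hxB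
          rcases hx with hx | hx
          · exact hx
          · exact absurd (le_of_eq hx.symm) (by simpa [hB] using hxB)
        rw [integral_congr_ae this]; simp
      rw [diff_eq]
      exact (ENNReal.toReal_eq_zero_iff _).1 (hcalc.trans hz) |>.resolve_right
        (measure_ne_top μ _)
    -- part 2 : μ ((B ∩ S) \ D) = 0
    have part2 : μ ((B ∩ S) \ D) = 0 := by
      have e1 : (μ (S ∩ B)).toReal = ∫ x in B, hSf x ∂μ :=
        (setIntegral_condexp_indR hm hS hBm).symm
      have e2 : (μ (D ∩ B)).toReal = ∫ x in B, h x ∂μ :=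
        (setIntegral_condexp_indR hm hD hBm).symm
      have heq : h =ᵐ[μ.restrict B] hSf := by
        filter_upwards [ae_restrict_of_ae h_le, ae_restrict_mem (hm _ hBm)] with x hx hxB
        exact le_antisymm hx (by simpa [hB] using hxB)
      have : (μ (S ∩ B)).toReal = (μ (D ∩ B)).toReal := by
        rw [e1, e2]; exact integral_congr_ae heq.symm
      have hmeq : μ (S ∩ B) = μ (D ∩ B) :=
        (ENNReal.toReal_eq_toReal_iff' (measure_ne_top μ _) (measure_ne_top μ _)).1 this
      have hsub : D ∩ B ⊆ S ∩ B := inter_subset_inter_left _ hDS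
      have : (B ∩ S) \ D = (S ∩ B) \ (D ∩ B) := by
        ext x; simp only [mem_diff, mem_inter_iff]; tauto
      rw [this]
      rw [measure_diff hsub ((hD.inter (hm _ hBm)).nullMeasurableSet) (measure_ne_top μ _)]
      rw [hmeq]; simp
    refine hDne B hBm ?_
    rw [Measure.restrict_apply' hS]
    refine measure_mono_null (fun x hx => ?_) (measure_union_null part1 part2)
    rcases hx with ⟨hx, hxS⟩
    rcases hx with ⟨hx1, hx2⟩ | ⟨hx1, hx2⟩
    · exact Or.inl ⟨hx1, hx2⟩
    · exact Or.inr ⟨⟨hx1, hxS⟩, hx2⟩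
  · -- μ G > 0
    have hGpos : 0 < μ G := pos_iff_ne_zero.2 hGz
    set G₁ : Set Ω := G ∩ {x | h x ≤ hSf x / 2} with hG₁
    set G₂ : Set Ω := G ∩ {x | hSf x / 2 < h x} with hG₂
    have hG₁m : MeasurableSet[m] G₁ := hGm.inter
      (msetLE hmeas.measurable (hSmeas.measurable.div_const 2))
    have hG₂m : MeasurableSet[m] G₂ := hGm.inter
      (msetLT (hSmeas.measurable.div_const 2) hmeas.measurable)
    have hunion : G = G₁ ∪ G₂ := by
      ext x; simp only [hG₁, hG₂, mem_union, mem_inter_iff, mem_setOf_eq]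
      constructor
      · intro hx; by_cases hc : h x ≤ hSf x / 2
        · exact Or.inl ⟨hx, hc⟩
        · exact Or.inr ⟨hx, not_le.1 hc⟩
      · rintro (⟨hx, -⟩ | ⟨hx, -⟩) <;> exact hx
    have hcases : 0 < μ G₁ ∨ 0 < μ G₂ := by
      by_contra hc
      push_neg at hc
      obtain ⟨h1, h2⟩ := hc
      have : μ G = 0 := by
        rw [hunion]
        exact measure_union_null (le_antisymm (by simpa using h1) zero_le)
          (le_antisymm (by simpa using h2) zero_le)
      exact hGz this
    rcases hcases with hg1 | hg2
    · -- take B = D ∩ G₁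
      refine ⟨D ∩ G₁, hD.inter (hm _ hG₁m), fun x hx => hDS hx.1, ?_, ?_⟩
      · by_contra hzz
        have hz0 : μ (D ∩ G₁) = 0 := by
          simpa using (not_lt.1 hzz)
        have hint : ∫ x in G₁, h x ∂μ = (μ (D ∩ G₁)).toReal :=
          setIntegral_condexp_indR hm hD hG₁m
        have : μ G₁ = 0 := by
          refine measure_eq_zero_of_setIntegral_le (c := 0) integrable_condExp (hm _ hG₁m)
            (fun x hx => hx.1.1) ?_
          rw [hint, hz0]; simp
        exact absurd this (pos_iff_ne_zero.1 hg1)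
      · have hid : indR (D ∩ G₁) = G₁.indicator (indR D) := by
          funext x
          by_cases h1 : x ∈ G₁ <;> by_cases h2 : x ∈ D <;>
            simp [indR, Set.indicator_apply, h1, h2, Set.mem_inter_iff]
        have hcond : μ[indR (D ∩ G₁)|m] =ᵐ[μ] G₁.indicator h := by
          rw [hid]; exact condExp_indicator (integrable_indR hD) hG₁m
        filter_upwards [hcond, hS_nonneg] with x hx hx2
        simp only [Pi.zero_apply] at hx2
        rw [hx]
        by_cases hxG : x ∈ G₁
        · rw [Set.indicator_of_mem hxG]
          have := hxG.2
          simp only [mem_setOf_eq] at this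
          linarith
        · rw [Set.indicator_of_notMem hxG]
          linarith
    · -- take B = (S \ D) ∩ G₂
      have hSD : MeasurableSet[m0] (S \ D) := hS.diff hD
      have hfun : indR (S \ D) = fun x => indR S x - indR D x := by
        funext x
        by_cases h1 : x ∈ D <;> by_cases h2 : x ∈ S
        · simp [indR, Set.indicator_apply, h1, h2]
        · exact absurd (hDS h1) h2
        · simp [indR, Set.indicator_apply, h1, h2]
        · simp [indR, Set.indicator_apply, h1, h2]
      have hcondSD : μ[indR (S \ D)|m] =ᵐ[μ] fun x => hSf x - h x := by
        rw [hfun]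
        exact condExp_sub (m := m) (integrable_indR hS) (integrable_indR hD)
      refine ⟨(S \ D) ∩ G₂, hSD.inter (hm _ hG₂m), fun x hx => hx.1.1, ?_, ?_⟩
      · by_contra hzz
        have hz0 : μ ((S \ D) ∩ G₂) = 0 := by simpa using (not_lt.1 hzz)
        have hint : ∫ x in G₂, (μ[indR (S \ D)|m]) x ∂μ = (μ ((S \ D) ∩ G₂)).toReal :=
          setIntegral_condexp_indR hm hSD hG₂m
        have hint2 : ∫ x in G₂, (hSf x - h x) ∂μ = (μ ((S \ D) ∩ G₂)).toReal := by
          rw [← hint]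
          exact integral_congr_ae (ae_restrict_of_ae hcondSD.symm)
        have : μ G₂ = 0 := by
          refine measure_eq_zero_of_setIntegral_le (g := fun x => hSf x - h x) (c := 0)
            (integrable_condExp.sub integrable_condExp) (hm _ hG₂m)
            (fun x hx => sub_pos.2 hx.1.2) ?_
          rw [hint2, hz0]; simp
        exact absurd this (pos_iff_ne_zero.1 hg2)
      · have hid : indR ((S \ D) ∩ G₂) = G₂.indicator (indR (S \ D)) := by
          funext x
          by_cases h1 : x ∈ G₂ <;> by_cases h2 : x ∈ S \ D <;>
            simp [indR, Set.indicator_apply, h1, h2, Set.mem_inter_iff]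
        have hcond : μ[indR ((S \ D) ∩ G₂)|m] =ᵐ[μ] G₂.indicator (fun x => hSf x - h x) := by
          rw [hid]
          refine (condExp_indicator (integrable_indR hSD) hG₂m).trans ?_
          filter_upwards [hcondSD] with x hx
          by_cases hxG : x ∈ G₂
          · rw [Set.indicator_of_mem hxG, Set.indicator_of_mem hxG, hx]
          · rw [Set.indicator_of_notMem hxG, Set.indicator_of_notMem hxG]
        filter_upwards [hcond, hS_nonneg] with x hx hx2
        simp only [Pi.zero_apply] at hx2
        rw [hx]
        by_cases hxG : x ∈ G₂
        · rw [Set.indicator_of_mem hxG]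
          have := hxG.2
          simp only [mem_setOf_eq] at this
          linarith
        · rw [Set.indicator_of_notMem hxG]
          linarith



lemma condexp_indR_le_one {m : MeasurableSpace Ω} (hm : m ≤ m0) {A : Set Ω}
    (hA : MeasurableSet[m0] A) :
    μ[indR A|m] ≤ᵐ[μ] fun _ => (1:ℝ) := by
  have h := condExp_mono (μ := μ) (m := m) (integrable_indR hA) (integrable_const (1:ℝ))
    (Filter.Eventually.of_forall fun x => Set.indicator_le_self' (fun _ _ => zero_le_one) x)
  calc μ[indR A|m] ≤ᵐ[μ] μ[(fun _ => (1:ℝ))|m] := h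
    _ = fun _ => (1:ℝ) := condExp_const hm 1

lemma exists_small_density {m : MeasurableSpace Ω} (hm : m ≤ m0)
    (hcg : @MeasurableSpace.CountablyGenerated Ω m)
    (hsat : @Saturated Ω m0 μ) {S : Set Ω} (hS : MeasurableSet[m0] S) (hS0 : 0 < μ S) (n : ℕ) :
    ∃ B, MeasurableSet[m0] B ∧ B ⊆ S ∧ 0 < μ B ∧
      μ[indR B|m] ≤ᵐ[μ] fun _ => ((1:ℝ)/2)^n := by
  induction n with
  | zero => exact ⟨S, hS, subset_rfl, hS0, by simpa using condexp_indR_le_one hm hS⟩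
  | succ n ih =>
    obtain ⟨B, hB, hBS, hB0, hBle⟩ := ih
    obtain ⟨B', hB', hB'B, hB'0, hB'le⟩ := exists_half_split hm hcg hsat hB hB0
    refine ⟨B', hB', hB'B.trans hBS, hB'0, ?_⟩
    filter_upwards [hB'le, hBle] with x h1 h2
    calc (μ[indR B'|m]) x ≤ 1/2 * (μ[indR B|m]) x := h1
      _ ≤ 1/2 * (1/2)^n := by linarith
      _ = (1/2)^(n+1) := by ring

lemma ofReal_mul_eq {b : ℝ≥0∞} (hb : b ≠ ∞) {t : ℝ} (ht : 0 ≤ t) :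
    ENNReal.ofReal t * b = ENNReal.ofReal (t * b.toReal) := by
  rw [ENNReal.ofReal_mul ht, ENNReal.ofReal_toReal hb]

lemma le_ofReal_mul_iff {a b : ℝ≥0∞} (ha : a ≠ ∞) (hb : b ≠ ∞) {t : ℝ} (ht : 0 ≤ t) :
    a ≤ ENNReal.ofReal t * b ↔ a.toReal ≤ t * b.toReal := by
  rw [ofReal_mul_eq hb ht, ENNReal.le_ofReal_iff_toReal_le ha (by positivity)]

lemma eq_ofReal_mul_iff {a b : ℝ≥0∞} (ha : a ≠ ∞) (hb : b ≠ ∞) {t : ℝ} (ht : 0 ≤ t) :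
    a = ENNReal.ofReal t * b ↔ a.toReal = t * b.toReal := by
  rw [ofReal_mul_eq hb ht]
  constructor
  · intro h; rw [h]; exact ENNReal.toReal_ofReal (by positivity)
  · intro h; rw [← h, ENNReal.ofReal_toReal ha]

lemma setIntegral_const' {C : Set Ω} (c : ℝ) : ∫ _x in C, c ∂μ = c * (μ C).toReal := by
  rw [setIntegral_const, smul_eq_mul, mul_comm, measureReal_def]

lemma setIntegral_le_const {f : Ω → ℝ} {C : Set Ω} (hC : MeasurableSet C)
    (hf : Integrable f μ) {c : ℝ} (h : ∀ᵐ x ∂μ.restrict C, f x ≤ c) :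
    ∫ x in C, f x ∂μ ≤ c * (μ C).toReal := by
  calc ∫ x in C, f x ∂μ ≤ ∫ _x in C, c ∂μ :=
        integral_mono_ae hf.integrableOn (integrableOn_const (measure_ne_top _ _)) h
    _ = c * (μ C).toReal := by rw [setIntegral_const, smul_eq_mul, mul_comm, measureReal_def]

lemma condexp_le_of_bound {m : MeasurableSpace Ω} (hm : m ≤ m0) {A : Set Ω} {t : ℝ}
    (hA : MeasurableSet[m0] A) (ht0 : 0 ≤ t)
    (hle : ∀ C, MeasurableSet[m] C → μ (A ∩ C) ≤ ENNReal.ofReal t * μ C) :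
    μ[indR A|m] ≤ᵐ[μ] fun _ => t := by
  set C : Set Ω := {x | (fun _ => t) x < (μ[indR A|m]) x} with hC
  have hCm : MeasurableSet[m] C := msetLT (@measurable_const ℝ Ω _ m t) stronglyMeasurable_condExp.measurable
  have hint : ∫ x in C, (μ[indR A|m]) x ∂μ = (μ (A ∩ C)).toReal := setIntegral_condexp_indR hm hA hCm
  have hbound : ∫ x in C, (μ[indR A|m]) x ∂μ ≤ t * (μ C).toReal := by
    rw [hint]
    exact (le_ofReal_mul_iff (measure_ne_top μ _) (measure_ne_top μ _) ht0).1 (hle C hCm)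
  have hzero : μ C = 0 :=
    measure_eq_zero_of_setIntegral_le integrable_condExp (hm _ hCm) (fun x hx => hx) hbound
  rw [Filter.EventuallyLE, ae_iff]
  convert hzero using 2
  ext x; simp [hC]

lemma bound_of_condexp_le {m : MeasurableSpace Ω} (hm : m ≤ m0) {A : Set Ω} {t : ℝ}
    (hA : MeasurableSet[m0] A) (ht0 : 0 ≤ t)
    (hle : μ[indR A|m] ≤ᵐ[μ] fun _ => t) :
    ∀ C, MeasurableSet[m] C → μ (A ∩ C) ≤ ENNReal.ofReal t * μ C := by
  intro C hCm
  rw [le_ofReal_mul_iff (measure_ne_top μ _) (measure_ne_top μ _) ht0,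
    ← setIntegral_condexp_indR hm hA hCm]
  exact setIntegral_le_const (hm _ hCm) integrable_condExp (ae_restrict_of_ae hle)


lemma exists_uniform_slice {m : MeasurableSpace Ω} (hm : m ≤ m0)
    (hcg : @MeasurableSpace.CountablyGenerated Ω m)
    (hsat : @Saturated Ω m0 μ) {t : ℝ} (ht0 : 0 ≤ t) (ht1 : t ≤ 1) :
    ∃ A, MeasurableSet[m0] A ∧ ∀ C, MeasurableSet[m] C →
      μ (A ∩ C) = ENNReal.ofReal t * μ C := by
  classical
  set P : Set Ω → Prop := fun A => MeasurableSet[m0] A ∧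
    ∀ C, MeasurableSet[m] C → μ (A ∩ C) ≤ ENNReal.ofReal t * μ C with hP
  have hPempty : P ∅ := ⟨@MeasurableSet.empty Ω m0, fun C hC => by simp⟩
  set σ : Set Ω → ℝ≥0∞ := fun A => ⨆ (A' : Set Ω) (_ : P A' ∧ A ⊆ A'), μ A' with hσ
  have hσ_le : ∀ A A', P A' → A ⊆ A' → μ A' ≤ σ A := fun A A' h1 h2 =>
    le_iSup₂ (f := fun (A' : Set Ω) (_ : P A' ∧ A ⊆ A') => μ A') A' ⟨h1, h2⟩
  have hσ_fin : ∀ A, σ A ≠ ∞ := by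
    intro A
    refine ne_top_of_le_ne_top (measure_ne_top μ Set.univ) ?_
    exact iSup₂_le fun A' _ => measure_mono (Set.subset_univ _)
  have hnext : ∀ A, P A → ∀ n : ℕ, ∃ A',
      (P A' ∧ A ⊆ A') ∧ σ A ≤ μ A' + ((n:ℝ≥0∞)+1)⁻¹ := by
    intro A hA n
    by_cases h0 : σ A = 0
    · exact ⟨A, ⟨hA, subset_rfl⟩, by simp [h0]⟩
    · have hεpos : (0:ℝ≥0∞) < ((n:ℝ≥0∞)+1)⁻¹ :=
        ENNReal.inv_pos.2 (by simp [ENNReal.add_eq_top])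
      have hlt : σ A - ((n:ℝ≥0∞)+1)⁻¹ < σ A :=
        ENNReal.sub_lt_self (hσ_fin A) h0 hεpos.ne'
      obtain ⟨A', hA', hlt2⟩ : ∃ A', (P A' ∧ A ⊆ A') ∧ σ A - ((n:ℝ≥0∞)+1)⁻¹ < μ A' := by
        have := lt_iSup_iff.1 (hlt.trans_le (le_of_eq rfl))
        obtain ⟨A', hA'⟩ := this
        have := lt_iSup_iff.1 hA'
        obtain ⟨hcond, hval⟩ := this
        exact ⟨A', hcond, hval⟩
      exact ⟨A', hA', tsub_le_iff_right.1 hlt2.le⟩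
  choose next hnextP hnextBound using hnext
  let F : ℕ → {A : Set Ω // P A} := fun n => Nat.rec (⟨∅, hPempty⟩ : {A : Set Ω // P A})
      (fun k Ak => ⟨next Ak.1 Ak.2 k, (hnextP Ak.1 Ak.2 k).1⟩) n
  have hFmono : ∀ n, (F n).1 ⊆ (F (n+1)).1 := fun n => (hnextP (F n).1 (F n).2 n).2
  have hFbound : ∀ n, σ (F n).1 ≤ μ (F (n+1)).1 + ((n:ℝ≥0∞)+1)⁻¹ := fun n =>
    hnextBound (F n).1 (F n).2 n
  have hFmono' : Monotone (fun n => (F n).1) := monotone_nat_of_le_succ hFmono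
  set Astar := ⋃ n, (F n).1 with hAstar
  have hAstarm : MeasurableSet[m0] Astar := MeasurableSet.iUnion fun n => (F n).2.1
  have hPA : P Astar := by
    refine ⟨hAstarm, fun C hC => ?_⟩
    have hrw : Astar ∩ C = ⋃ n, ((F n).1 ∩ C) := by rw [hAstar, Set.iUnion_inter]
    rw [hrw, Directed.measure_iUnion
      (Monotone.directed_le fun a b hab => Set.inter_subset_inter_left _ (hFmono' hab))]
    exact iSup_le fun n => (F n).2.2 C hC
  have hmax : ∀ A', P A' → Astar ⊆ A' → μ A' ≤ μ Astar := by
    intro A' hA' hsub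
    refine ENNReal.le_of_forall_pos_le_add fun ε hε hfin => ?_
    obtain ⟨n, hn⟩ := ENNReal.exists_inv_nat_lt (a := (ε:ℝ≥0∞)) (ENNReal.coe_ne_zero.2 hε.ne')
    calc μ A' ≤ σ (F n).1 :=
          hσ_le _ _ hA' ((Set.subset_iUnion (fun k => ((F k).1 : Set Ω)) n).trans hsub)
      _ ≤ μ (F (n+1)).1 + ((n:ℝ≥0∞)+1)⁻¹ := hFbound n
      _ ≤ μ Astar + ε := by
          refine add_le_add (measure_mono (Set.subset_iUnion (fun k => ((F k).1 : Set Ω)) (n+1))) ?_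
          refine le_trans ?_ hn.le
          exact ENNReal.inv_le_inv.2 (by simp)
  refine ⟨Astar, hAstarm, ?_⟩
  by_contra hcon
  push_neg at hcon
  obtain ⟨C₀, hC₀m, hC₀ne⟩ := hcon
  set h : Ω → ℝ := μ[indR Astar|m] with hh
  have h_le : h ≤ᵐ[μ] fun _ => t := condexp_le_of_bound hm hAstarm ht0 hPA.2
  set G : Set Ω := {x | h x < (fun _ => t) x} with hG
  have hGm : MeasurableSet[m] G :=
    msetLT stronglyMeasurable_condExp.measurable (@measurable_const ℝ Ω _ m t)
  have hGpos : 0 < μ G := by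
    by_contra hz
    have hz0 : μ G = 0 := by simpa using (not_lt.1 hz)
    have hGae : ∀ᵐ x ∂μ, x ∉ G := by
      rw [← compl_mem_ae_iff] at hz0; exact hz0
    have heq : h =ᵐ[μ] fun _ => t := by
      filter_upwards [h_le, hGae] with x h1 h2
      simp only [hG, mem_setOf_eq, not_lt] at h2
      exact le_antisymm h1 h2
    refine hC₀ne ?_
    rw [eq_ofReal_mul_iff (measure_ne_top μ _) (measure_ne_top μ _) ht0,
      ← setIntegral_condexp_indR hm hAstarm hC₀m]
    rw [integral_congr_ae (ae_restrict_of_ae heq), setIntegral_const']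
  set Gk : ℕ → Set Ω := fun k => {x | h x ≤ (fun _ => t - ((1:ℝ)/(k+1))) x} with hGk
  have hGkm : ∀ k, MeasurableSet[m] (Gk k) := fun k =>
    msetLE stronglyMeasurable_condExp.measurable (@measurable_const ℝ Ω _ m _)
  have hGcup : G ⊆ ⋃ k, Gk k := by
    intro x hx
    simp only [hG, mem_setOf_eq] at hx
    obtain ⟨k, hk⟩ := exists_nat_one_div_lt (sub_pos.2 hx)
    refine Set.mem_iUnion.2 ⟨k, ?_⟩
    simp only [hGk, mem_setOf_eq]
    have : (1:ℝ)/(k+1) < t - h x := by exact_mod_cast hk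
    linarith
  obtain ⟨k, hk⟩ : ∃ k, 0 < μ (Gk k) := by
    by_contra hz
    push_neg at hz
    have : μ (⋃ k, Gk k) = 0 := measure_iUnion_null fun k => by simpa using (hz k)
    exact absurd (measure_mono_null hGcup this) (pos_iff_ne_zero.1 hGpos)
  set S := Gk k \ Astar with hS
  have hSm : MeasurableSet[m0] S := (hm _ (hGkm k)).diff hAstarm
  have hk1pos : (0:ℝ) < 1/(k+1) := by positivity
  have hSpos : 0 < μ S := by
    by_contra hz
    have hz0 : μ S = 0 := by simpa using (not_lt.1 hz)
    have hsub : μ (Gk k) ≤ μ (Astar ∩ Gk k) := by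
      have hcover : Gk k ⊆ (Astar ∩ Gk k) ∪ S := by
        intro x hx
        by_cases hxa : x ∈ Astar
        · exact Or.inl ⟨hxa, hx⟩
        · exact Or.inr ⟨hx, hxa⟩
      calc μ (Gk k) ≤ μ ((Astar ∩ Gk k) ∪ S) := measure_mono hcover
        _ ≤ μ (Astar ∩ Gk k) + μ S := measure_union_le _ _
        _ = μ (Astar ∩ Gk k) := by rw [hz0, add_zero]
    have hint : (μ (Astar ∩ Gk k)).toReal = ∫ x in Gk k, h x ∂μ :=
      (setIntegral_condexp_indR hm hAstarm (hGkm k)).symm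
    have hbound : ∫ x in Gk k, h x ∂μ ≤ (t - 1/(k+1)) * (μ (Gk k)).toReal := by
      refine setIntegral_le_const (hm _ (hGkm k)) integrable_condExp ?_
      filter_upwards [ae_restrict_mem (hm _ (hGkm k))] with x hx
      exact hx
    have h1 : (μ (Gk k)).toReal ≤ (t - 1/(k+1)) * (μ (Gk k)).toReal := by
      calc (μ (Gk k)).toReal ≤ (μ (Astar ∩ Gk k)).toReal :=
            ENNReal.toReal_mono (measure_ne_top μ _) hsub
        _ = ∫ x in Gk k, h x ∂μ := hint
        _ ≤ (t - 1/(k+1)) * (μ (Gk k)).toReal := hbound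
    have hkpos : 0 < (μ (Gk k)).toReal :=
      ENNReal.toReal_pos (pos_iff_ne_zero.1 hk) (measure_ne_top μ _)
    nlinarith
  obtain ⟨nn, hnn⟩ : ∃ n:ℕ, ((1:ℝ)/2)^n ≤ 1/(k+1) := by
    obtain ⟨n, hn⟩ := exists_pow_lt_of_lt_one hk1pos (by norm_num : (1:ℝ)/2 < 1)
    exact ⟨n, hn.le⟩
  obtain ⟨B, hBmeas, hBS, hBpos, hBle⟩ := exists_small_density hm hcg hsat hSm hSpos nn
  have hBsubGk : B ⊆ Gk k := fun x hx => (hBS hx).1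
  have hBvanish : μ[indR B|m] =ᵐ[μ] (Gk k).indicator (μ[indR B|m]) := by
    have hid : indR B = (Gk k).indicator (indR B) := by
      funext x
      by_cases h1 : x ∈ Gk k
      · rw [Set.indicator_of_mem h1]
      · rw [Set.indicator_of_notMem h1]
        exact Set.indicator_of_notMem (fun hxB => h1 (hBsubGk hxB)) _
    conv_lhs => rw [hid]
    exact condExp_indicator (integrable_indR hBmeas) (hGkm k)
  have hsum : ∀ᵐ x ∂μ, h x + (μ[indR B|m]) x ≤ t := by
    filter_upwards [h_le, hBle, hBvanish] with x h1 h2 h3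
    by_cases hxG : x ∈ Gk k
    · have hx1 : h x ≤ t - 1/(k+1) := hxG
      have h2' : (μ[indR B|m]) x ≤ 1/(k+1) := le_trans h2 hnn
      linarith
    · rw [h3, Set.indicator_of_notMem hxG]
      have h1' : h x ≤ t := h1
      linarith
  have hBdisj : Disjoint Astar B := Set.disjoint_left.2 fun x hxA hxB => (hBS hxB).2 hxA
  have hPA' : P (Astar ∪ B) := by
    refine ⟨hAstarm.union hBmeas, fun C hC => ?_⟩
    have hsplit : (Astar ∪ B) ∩ C = (Astar ∩ C) ∪ (B ∩ C) := by
      rw [Set.union_inter_distrib_right]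
    rw [hsplit, measure_union (hBdisj.mono Set.inter_subset_left Set.inter_subset_left)
      (hBmeas.inter (hm _ hC))]
    have e1 : (μ (Astar ∩ C)).toReal = ∫ x in C, h x ∂μ :=
      (setIntegral_condexp_indR hm hAstarm hC).symm
    have e2 : (μ (B ∩ C)).toReal = ∫ x in C, (μ[indR B|m]) x ∂μ :=
      (setIntegral_condexp_indR hm hBmeas hC).symm
    have esum : ∫ x in C, (h x + (μ[indR B|m]) x) ∂μ ≤ t * (μ C).toReal :=
      setIntegral_le_const (hm _ hC) (integrable_condExp.add integrable_condExp)
        (ae_restrict_of_ae hsum)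
    rw [le_ofReal_mul_iff (ENNReal.add_ne_top.2 ⟨measure_ne_top μ _, measure_ne_top μ _⟩)
        (measure_ne_top μ _) ht0,
      ENNReal.toReal_add (measure_ne_top μ _) (measure_ne_top μ _), e1, e2]
    have hi1 : Integrable h (μ.restrict C) := integrable_condExp.restrict
    have hi2 : Integrable (μ[indR B|m]) (μ.restrict C) := integrable_condExp.restrict
    rw [← integral_add hi1 hi2]
    exact esum
  have hlt : μ Astar < μ (Astar ∪ B) := by
    rw [measure_union hBdisj hBmeas]
    exact ENNReal.lt_add_right (measure_ne_top μ _) (pos_iff_ne_zero.1 hBpos)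
  exact absurd (hmax _ hPA' Set.subset_union_left) (not_le.2 hlt)


end SatAux

section Wrap
variable {Ω E : Type*} {m0 : MeasurableSpace Ω} {μ : MeasureTheory.Measure Ω}
  [NormedAddCommGroup E] [NormedSpace ℝ E] [CompleteSpace E]

lemma integrable_indicator'' {f : Ω → E} {A : Set Ω} (hf : Integrable f μ)
    (hA : MeasurableSet A) : Integrable (A.indicator f) μ := hf.indicator hA

lemma integral_indicator'' {f : Ω → E} {A : Set Ω} (hA : MeasurableSet A) :
    ∫ x, A.indicator f x ∂μ = ∫ x in A, f x ∂μ := integral_indicator hA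

lemma integral_add_compl'' {f : Ω → E} {A : Set Ω} (hA : MeasurableSet A)
    (hf : Integrable f μ) :
    (∫ x in A, f x ∂μ) + ∫ x in Aᶜ, f x ∂μ = ∫ x, f x ∂μ := integral_add_compl hA hf

end Wrap

lemma SatAux.main {Ω : Type*} {m0 : MeasurableSpace Ω} (μ : Measure Ω) [IsFiniteMeasure μ]
    {E : Type*} [NormedAddCommGroup E] [NormedSpace ℝ E] [CompleteSpace E]
    [TopologicalSpace.SeparableSpace E]
    (hsat : @Saturated Ω m0 μ)
    (K : Set (Lp E 1 μ)) (hdec : Decomposable μ K) :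
    Convex ℝ {x : E | ∃ f ∈ K, ∫ ω, (f : Ω → E) ω ∂μ = x} := by
  rintro x ⟨f, hf, hfx⟩ y ⟨g, hg, hgy⟩ a b ha hb hab
  haveI : SecondCountableTopology E := UniformSpace.secondCountable_of_separable E
  letI mE : MeasurableSpace E := borel E
  haveI : BorelSpace E := ⟨rfl⟩
  set φ : Ω → E := ⇑(f - g) with hφ
  have hφsm : StronglyMeasurable φ := ((f - g : Lp E 1 μ) : Ω →ₘ[μ] E).stronglyMeasurable
  have hφae : φ =ᵐ[μ] fun x => (f : Ω → E) x - (g : Ω → E) x := Lp.coeFn_sub f g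
  set m : MeasurableSpace Ω := MeasurableSpace.comap φ mE with hmdef
  have hm : m ≤ m0 := measurable_iff_comap_le.1 hφsm.measurable
  have hcg : @MeasurableSpace.CountablyGenerated Ω m := MeasurableSpace.CountablyGenerated.comap φ
  have hφmeas : @Measurable Ω E m mE φ := by
    rw [@measurable_iff_comap_le Ω E m mE φ]
  have hφm : @StronglyMeasurable Ω E _ m φ := hφmeas.stronglyMeasurable
  obtain ⟨A, hA, hAprop⟩ := SatAux.exists_uniform_slice (μ := μ) hm hcg hsat ha (by linarith)
  have hfint : Integrable (⇑f) μ := L1.integrable_coeFn f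
  have hgint : Integrable (⇑g) μ := L1.integrable_coeFn g
  have heqfun : A.piecewise (⇑f) (⇑g) = fun x => A.indicator (⇑f) x + Aᶜ.indicator (⇑g) x := by
    funext z
    by_cases hz : z ∈ A <;>
      simp [Set.piecewise, Set.indicator_apply, hz]
  have hmem : MemLp (A.piecewise (⇑f) (⇑g)) 1 μ := by
    rw [heqfun]
    exact ((Lp.memLp f).indicator hA).add ((Lp.memLp g).indicator hA.compl)
  refine ⟨hmem.toLp _, hdec f hf g hg A hA _ (hmem.coeFn_toLp), ?_⟩
  have hHae : ⇑(hmem.toLp _) =ᵐ[μ] A.piecewise (⇑f) (⇑g) := hmem.coeFn_toLp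
  have hiff : Integrable (A.indicator (⇑f)) μ := integrable_indicator'' hfint hA
  have higg : Integrable (Aᶜ.indicator (⇑g)) μ := integrable_indicator'' hgint hA.compl
  have e1 : ∫ ω, A.indicator (⇑f) ω ∂μ = ∫ ω in A, f ω ∂μ := integral_indicator'' hA
  have e2 : ∫ ω, Aᶜ.indicator (⇑g) ω ∂μ = ∫ ω in Aᶜ, g ω ∂μ := integral_indicator'' hA.compl
  have hsplit : ∫ ω, (hmem.toLp _ : Lp E 1 μ) ω ∂μ
      = (∫ ω in A, f ω ∂μ) + ∫ ω in Aᶜ, g ω ∂μ := by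
    rw [integral_congr_ae hHae, heqfun, integral_add hiff higg, e1, e2]
  set ν := μ.trim hm with hν
  have hmeasure : (μ.restrict A).trim hm = (ENNReal.ofReal a) • ν := by
    refine @Measure.ext Ω m _ _ fun s hs => ?_
    rw [trim_measurableSet_eq hm hs]
    have : (ENNReal.ofReal a • ν) s = ENNReal.ofReal a * ν s := rfl
    rw [this, hν, trim_measurableSet_eq hm hs, Measure.restrict_apply (hm _ hs), Set.inter_comm]
    exact hAprop s hs
  have hkey : ∫ ω in A, φ ω ∂μ = a • ∫ ω, φ ω ∂μ := by
    have h1 : ∫ ω in A, φ ω ∂μ = ∫ ω, φ ω ∂((μ.restrict A).trim hm) := integral_trim hm hφm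
    have h2 : ∫ ω, φ ω ∂μ = ∫ ω, φ ω ∂ν := integral_trim hm hφm
    rw [h1, hmeasure, integral_smul_measure, h2, ENNReal.toReal_ofReal ha]
  have hAφ : ∫ ω in A, φ ω ∂μ = (∫ ω in A, f ω ∂μ) - ∫ ω in A, g ω ∂μ := by
    rw [integral_congr_ae (ae_restrict_of_ae hφae)]
    exact integral_sub hfint.restrict hgint.restrict
  have hφtot : ∫ ω, φ ω ∂μ = (∫ ω, f ω ∂μ) - ∫ ω, g ω ∂μ := by
    rw [integral_congr_ae hφae]
    exact integral_sub hfint hgint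
  have hcompl : ∫ ω in Aᶜ, g ω ∂μ = (∫ ω, g ω ∂μ) - ∫ ω in A, g ω ∂μ :=
    eq_sub_of_add_eq' (integral_add_compl'' hA hgint)
  rw [hsplit, hcompl, ← hfx, ← hgy]
  have hmain : (∫ ω in A, f ω ∂μ) - ∫ ω in A, g ω ∂μ
      = a • (∫ ω, f ω ∂μ) - a • (∫ ω, g ω ∂μ) := by
    rw [← hAφ, hkey, hφtot, smul_sub]
  have hb' : b = 1 - a := by linarith
  rw [hb', sub_smul, one_smul]
  rw [show (∫ ω in A, f ω ∂μ) + ((∫ ω, g ω ∂μ) - ∫ ω in A, g ω ∂μ)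
      = ((∫ ω in A, f ω ∂μ) - ∫ ω in A, g ω ∂μ) + ∫ ω, g ω ∂μ by abel, hmain]
  abel

/-- Over a saturated finite measure space, the set of integrals of a nonempty decomposable
subset of `L¹(μ,E)` is convex (no closure needed). -/
theorem convex_integral_of_decomposable_saturated
    {Ω : Type*} [MeasurableSpace Ω] (μ : Measure Ω) [IsFiniteMeasure μ] [μ.IsComplete]
    {E : Type*} [NormedAddCommGroup E] [NormedSpace ℝ E] [CompleteSpace E]
    [TopologicalSpace.SeparableSpace E]
    (hsat : Saturated μ)
    (K : Set (Lp E 1 μ)) (hKne : K.Nonempty) (hdec : Decomposable μ K) :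
    Convex ℝ {x : E | ∃ f ∈ K, ∫ ω, (f : Ω → E) ω ∂μ = x} :=
  SatAux.main μ hsat K hdec
end
end

section
/- Let (Ω,Σ,μ) be a complete finite measure space and E an infinite-dimensional separable Banach space. If for every nonempty decomposable subset K of L¹(μ,E) the set {∫ f dμ : f ∈ K} is a convex subset of E, then (Ω,Σ,μ) is saturated. -/
open MeasureTheory TopologicalSpace
open scoped Classical

noncomputable section

section Bio
variable {E : Type*} [NormedAddCommGroup E] [NormedSpace ℝ E]

lemma exists_biortho_step (hinf : ¬ FiniteDimensional ℝ E) (n : ℕ)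
    (p : ∀ m, m < n → E × (E →L[ℝ] ℝ)) :
    ∃ q : E × (E →L[ℝ] ℝ),
      (∀ m (hm : m < n), (p m hm).2 q.1 = 0 ∧ q.2 (p m hm).1 = 0) ∧ q.2 q.1 = 1 := by
  set F : Submodule ℝ E := Submodule.span ℝ (Set.range fun m : Fin n => (p m m.2).1) with hFdef
  have hF : FiniteDimensional ℝ F := FiniteDimensional.span_of_finite ℝ (Set.finite_range _)
  set G : Submodule ℝ E :=
    ⨅ m : Fin n, LinearMap.ker (((p m m.2).2 : E →L[ℝ] ℝ) : E →ₗ[ℝ] ℝ) with hGdef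
  have hGF : ¬ G ≤ F := by
    intro hle
    have hG : FiniteDimensional ℝ G := Submodule.finiteDimensional_of_le hle
    set Φ : E →ₗ[ℝ] (Fin n → ℝ) :=
      LinearMap.pi (fun m : Fin n => (((p m m.2).2 : E →L[ℝ] ℝ) : E →ₗ[ℝ] ℝ)) with hΦ
    have hker : LinearMap.ker Φ = G := LinearMap.ker_pi _
    have hquot : FiniteDimensional ℝ (E ⧸ G) := by
      rw [← hker]
      exact Module.Finite.equiv Φ.quotKerEquivRange.symm
    apply hinf
    rw [FiniteDimensional, ← Module.rank_lt_aleph0_iff,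
      ← rank_quotient_add_rank_of_divisionRing G]
    exact Cardinal.add_lt_aleph0 (Module.rank_lt_aleph0_iff.mpr hquot)
      (Module.rank_lt_aleph0_iff.mpr hG)
  obtain ⟨y, hyG, hyF⟩ := SetLike.not_le_iff_exists.mp hGF
  obtain ⟨f, u, hfu, huy⟩ :=
    geometric_hahn_banach_closed_point (F.convex) (F.closed_of_finiteDimensional) hyF
  have hf0 : ∀ a ∈ F, f a = 0 := by
    intro a ha
    by_contra hfa
    have ht : ∀ t : ℝ, t * f a < u := by
      intro t
      have := hfu (t • a) (F.smul_mem t ha)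
      simpa [smul_eq_mul] using this
    have h1 := ht ((u + 1) / f a)
    rw [div_mul_cancel₀ _ hfa] at h1
    linarith only [h1]
  have hu0 : 0 < u := by
    have := hfu 0 F.zero_mem
    simpa using this
  have hfy : 0 < f y := hu0.trans huy
  refine ⟨(y, (f y)⁻¹ • f), fun m hm => ⟨?_, ?_⟩, ?_⟩
  · have : y ∈ LinearMap.ker (((p m hm).2 : E →L[ℝ] ℝ) : E →ₗ[ℝ] ℝ) := by
      have h2 := (Submodule.mem_iInf _).mp hyG ⟨m, hm⟩
      exact h2
    simpa using this
  · have hmem : (p m hm).1 ∈ F := Submodule.subset_span ⟨⟨m, hm⟩, rfl⟩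
    simp [hf0 _ hmem]
  · simp [inv_mul_cancel₀ hfy.ne']

private noncomputable def bioHist (hinf : ¬ FiniteDimensional ℝ E) : ℕ → (ℕ → E × (E →L[ℝ] ℝ))
  | 0 => fun _ => (0, 0)
  | n + 1 => Function.update (bioHist hinf n) n
      (Classical.choose (exists_biortho_step hinf n (fun m _ => bioHist hinf n m)))

private noncomputable def bioAux (hinf : ¬ FiniteDimensional ℝ E) (n : ℕ) : E × (E →L[ℝ] ℝ) :=
  bioHist hinf (n + 1) n

private lemma bioHist_agree (hinf : ¬ FiniteDimensional ℝ E) :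
    ∀ n m, m < n → bioHist hinf n m = bioAux hinf m := by
  intro n
  induction n with
  | zero => intro m hm; omega
  | succ n ih =>
    intro m hm
    rcases Nat.lt_succ_iff_lt_or_eq.mp hm with hmn | rfl
    · rw [bioHist, Function.update_of_ne (by omega)]
      exact ih m hmn
    · rfl

private lemma bioAux_spec (hinf : ¬ FiniteDimensional ℝ E) (n : ℕ) :
    (∀ m (hm : m < n),
        (bioAux hinf m).2 (bioAux hinf n).1 = 0 ∧ (bioAux hinf n).2 (bioAux hinf m).1 = 0)
      ∧ (bioAux hinf n).2 (bioAux hinf n).1 = 1 := by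
  have hdef : bioAux hinf n
      = Classical.choose (exists_biortho_step hinf n (fun m _ => bioHist hinf n m)) := by
    show bioHist hinf (n + 1) n = _
    rw [bioHist, Function.update_self]
  have hspec := Classical.choose_spec (exists_biortho_step hinf n (fun m _ => bioHist hinf n m))
  rw [← hdef] at hspec
  refine ⟨fun m hm => ?_, hspec.2⟩
  have := hspec.1 m hm
  rwa [bioHist_agree hinf n m hm] at this

lemma exists_biorthogonal (hinf : ¬ FiniteDimensional ℝ E) :
    ∃ (x : ℕ → E) (φ : ℕ → E →L[ℝ] ℝ),
      (∀ n m, φ n (x m) = if n = m then 1 else 0) := by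
  refine ⟨fun n => (bioAux hinf n).1, fun n => (bioAux hinf n).2, fun n m => ?_⟩
  rcases lt_trichotomy n m with hnm | rfl | hmn
  · rw [if_neg hnm.ne]
    exact ((bioAux_spec hinf m).1 n hnm).1
  · rw [if_pos rfl]
    exact (bioAux_spec hinf n).2
  · rw [if_neg hmn.ne']
    exact ((bioAux_spec hinf n).1 m hmn).2

end Bio

/-- If `E` is an infinite-dimensional separable Banach space and the set of integrals of
every nonempty decomposable subset of `L¹(μ,E)` is convex, then `(Ω,Σ,μ)` is saturated. -/
theorem saturated_of_convex_integral_of_decomposable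
    {Ω : Type*} [MeasurableSpace Ω] (μ : Measure Ω) [IsFiniteMeasure μ] [μ.IsComplete]
    {E : Type*} [NormedAddCommGroup E] [NormedSpace ℝ E] [CompleteSpace E]
    [TopologicalSpace.SeparableSpace E]
    (hinf : ¬ FiniteDimensional ℝ E)
    (h : ∀ K : Set (Lp E 1 μ), K.Nonempty → Decomposable μ K →
      Convex ℝ {x : E | ∃ f ∈ K, ∫ ω, (f : Ω → E) ω ∂μ = x}) :
    Saturated μ := by
  intro S hS hSpos hsep
  set ν : Measure Ω := μ.restrict S with hν
  haveI : IsFiniteMeasure ν := inferInstance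
  haveI : Nonempty (Lp ℝ 1 ν) := ⟨0⟩
  obtain ⟨x, φ, hbi⟩ := exists_biorthogonal (E := E) hinf
  set u : ℕ → Ω → ℝ := fun n => (denseSeq (Lp ℝ 1 ν) n : Ω → ℝ) with hu
  have huint : ∀ n, Integrable (u n) ν := fun n => L1.integrable_coeFn _
  set v : ℕ → Ω → ℝ := fun n => S.indicator (u n) with hv
  have hvint : ∀ n, Integrable (v n) μ := fun n => (integrable_indicator_iff hS).mpr (huint n)
  set a : ℕ → ℝ :=
    fun n => (2⁻¹ : ℝ)^n * ((∫ ω, |u n ω| ∂ν) + 1)⁻¹ * (‖x n‖ + 1)⁻¹ with ha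
  have hIpos : ∀ n, 0 ≤ ∫ ω, |u n ω| ∂ν := fun n => integral_nonneg (fun ω => abs_nonneg _)
  have hapos : ∀ n, 0 < a n := by
    intro n
    have h1 := hIpos n
    have h2 : (0:ℝ) ≤ ‖x n‖ := norm_nonneg _
    positivity
  set w : ℕ → Ω → E := fun n ω => (a n * v n ω) • x n with hw
  have hwint : ∀ n, Integrable (w n) μ := fun n => ((hvint n).const_mul (a n)).smul_const (x n)
  set c : ℕ → Lp E 1 μ := fun n => (hwint n).toL1 _ with hc
  -- integral of |v n| over μ equals integral of |u n| over ν
  have hvu : ∀ n, ∫ ω, |v n ω| ∂μ = ∫ ω, |u n ω| ∂ν := by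
    intro n
    have h1 : (fun ω => |v n ω|) = S.indicator (fun ω => |u n ω|) := by
      funext ω
      by_cases hω : ω ∈ S <;> simp [hv, Set.indicator, hω]
    rw [h1, integral_indicator hS]
  -- norm bound for c n
  have hnorm : ∀ n, ‖c n‖ ≤ (2⁻¹ : ℝ)^n := by
    intro n
    rw [L1.norm_eq_integral_norm]
    have h1 : ∫ ω, ‖(c n : Ω → E) ω‖ ∂μ = ∫ ω, ‖w n ω‖ ∂μ :=
      integral_congr_ae (((hwint n).coeFn_toL1).fun_comp norm)
    have h2 : ∫ ω, ‖w n ω‖ ∂μ = (a n * ∫ ω, |v n ω| ∂μ) * ‖x n‖ := by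
      have : ∀ ω, ‖w n ω‖ = (a n * |v n ω|) * ‖x n‖ := by
        intro ω
        rw [hw]
        rw [norm_smul, Real.norm_eq_abs, abs_mul, abs_of_pos (hapos n)]
      simp_rw [this]
      rw [integral_mul_const, integral_const_mul]
    rw [h1, h2, hvu n]
    set I := ∫ ω, |u n ω| ∂ν
    set X := ‖x n‖
    have hI : 0 ≤ I := hIpos n
    have hX : (0:ℝ) ≤ X := norm_nonneg _
    have e1 : I * (I + 1)⁻¹ ≤ 1 := by
      rw [← div_eq_mul_inv, div_le_one (by linarith)]; linarith
    have e2 : X * (X + 1)⁻¹ ≤ 1 := by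
      rw [← div_eq_mul_inv, div_le_one (by linarith)]; linarith
    have e3 : 0 ≤ I * (I + 1)⁻¹ := by positivity
    have e4 : 0 ≤ X * (X + 1)⁻¹ := by positivity
    have e5 : (0:ℝ) ≤ (2⁻¹:ℝ)^n := by positivity
    calc a n * I * X = (2⁻¹:ℝ)^n * (I * (I+1)⁻¹) * (X * (X+1)⁻¹) := by rw [ha]; ring
      _ ≤ (2⁻¹:ℝ)^n * 1 * 1 := by
          apply mul_le_mul (mul_le_mul le_rfl e1 e3 e5) e2 e4 (by positivity)
      _ = (2⁻¹:ℝ)^n := by ring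
  have hsummable : Summable c := by
    apply Summable.of_norm
    exact Summable.of_nonneg_of_le (fun n => norm_nonneg _) hnorm
      (summable_geometric_of_lt_one (by norm_num) (by norm_num))
  set gL : Lp E 1 μ := ∑' n, c n with hgL
  have hgsum : HasSum c gL := hsummable.hasSum
  -- set integrals commute with the sum
  have hTsum : ∀ B : Set Ω,
      HasSum (fun n => ∫ ω in B, (c n : Ω → E) ω ∂μ) (∫ ω in B, (gL : Ω → E) ω ∂μ) := by
    intro B
    have hadd : ∀ f g : Lp E 1 μ,
        ∫ ω in B, ((f + g : Lp E 1 μ) : Ω → E) ω ∂μ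
          = ∫ ω in B, (f : Ω → E) ω ∂μ + ∫ ω in B, (g : Ω → E) ω ∂μ := by
      intro f g
      rw [integral_congr_ae (ae_restrict_of_ae (Lp.coeFn_add f g))]
      exact integral_add ((L1.integrable_coeFn f).restrict)
        ((L1.integrable_coeFn g).restrict)
    exact hgsum.map (AddMonoidHom.mk' (fun f : Lp E 1 μ => ∫ ω in B, (f : Ω → E) ω ∂μ) hadd)
      (continuous_setIntegral B)
  have hcB : ∀ (B : Set Ω) n,
      ∫ ω in B, (c n : Ω → E) ω ∂μ = (a n * ∫ ω in B, v n ω ∂μ) • x n := by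
    intro B n
    rw [integral_congr_ae (ae_restrict_of_ae ((hwint n).coeFn_toL1))]
    show ∫ ω in B, (a n * v n ω) • x n ∂μ = _
    rw [integral_smul_const, integral_const_mul]
  have hphi : ∀ (B : Set Ω) k,
      φ k (∫ ω in B, (gL : Ω → E) ω ∂μ) = a k * ∫ ω in B, v k ω ∂μ := by
    intro B k
    have h1 : HasSum (fun n => φ k (∫ ω in B, (c n : Ω → E) ω ∂μ))
        (φ k (∫ ω in B, (gL : Ω → E) ω ∂μ)) := (φ k).hasSum (hTsum B)
    rw [← h1.tsum_eq, tsum_eq_single k ?_]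
    · rw [hcB]
      simp [hbi k k]
    · intro n hn
      rw [hcB]
      have hb := hbi k n
      rw [if_neg (Ne.symm hn)] at hb
      rw [ContinuousLinearMap.map_smul, hb]
      simp
  -- the decomposable set
  set G : Ω → E := (gL : Ω → E) with hG
  set K : Set (Lp E 1 μ) :=
    {f | ∃ B : Set Ω, MeasurableSet B ∧ (f : Ω → E) =ᵐ[μ] B.indicator G} with hK
  have hgLK : gL ∈ K := ⟨Set.univ, MeasurableSet.univ, by rw [Set.indicator_univ]⟩
  have h0K : (0 : Lp E 1 μ) ∈ K := by
    refine ⟨∅, MeasurableSet.empty, ?_⟩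
    filter_upwards [Lp.coeFn_zero E 1 μ] with ω hω
    rw [Set.indicator_empty]
    simpa using hω
  have hKne : K.Nonempty := ⟨gL, hgLK⟩
  have hKdec : Decomposable μ K := by
    rintro f ⟨B, hB, hfB⟩ g' ⟨C, hC, hgC⟩ A hA h' hh'
    refine ⟨(A ∩ B) ∪ (Aᶜ ∩ C), (hA.inter hB).union (hA.compl.inter hC), ?_⟩
    filter_upwards [hh', hfB, hgC] with ω h1 h2 h3
    rw [h1]
    by_cases hωA : ω ∈ A <;> by_cases hωB : ω ∈ B <;> by_cases hωC : ω ∈ C <;>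
      simp [Set.piecewise, Set.indicator, hωA, hωB, hωC, h2, h3]
  have hconv := h K hKne hKdec
  have h0mem : (0 : E) ∈ {x : E | ∃ f ∈ K, ∫ ω, (f : Ω → E) ω ∂μ = x} := by
    refine ⟨0, h0K, ?_⟩
    rw [integral_congr_ae (Lp.coeFn_zero E 1 μ)]
    simp
  have hImem : (∫ ω, (gL : Ω → E) ω ∂μ) ∈ {x : E | ∃ f ∈ K, ∫ ω, (f : Ω → E) ω ∂μ = x} :=
    ⟨gL, hgLK, rfl⟩
  have hmid := hconv h0mem hImem (by norm_num : (0:ℝ) ≤ 2⁻¹) (by norm_num : (0:ℝ) ≤ 2⁻¹)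
    (by norm_num)
  rw [smul_zero, zero_add] at hmid
  obtain ⟨f, ⟨B, hB, hfB⟩, hf⟩ := hmid
  have hfint : ∫ ω, (f : Ω → E) ω ∂μ = ∫ ω in B, G ω ∂μ := by
    rw [integral_congr_ae hfB, integral_indicator hB]
  -- the key identities
  have huniv : ∀ k, φ k (∫ ω, (gL : Ω → E) ω ∂μ) = a k * ∫ ω, v k ω ∂μ := by
    intro k
    have := hphi Set.univ k
    rwa [Measure.restrict_univ] at this
  have hkey : ∀ k, ∫ ω in B, v k ω ∂μ = 2⁻¹ * ∫ ω, v k ω ∂μ := by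
    intro k
    have h1 : φ k (∫ ω in B, G ω ∂μ) = φ k ((2⁻¹ : ℝ) • ∫ ω, (gL : Ω → E) ω ∂μ) := by
      rw [← hfint, hf]
    rw [hphi B k, ContinuousLinearMap.map_smul, smul_eq_mul, huniv k] at h1
    have h2 : a k * ∫ ω in B, v k ω ∂μ = a k * (2⁻¹ * ∫ ω, v k ω ∂μ) := by
      rw [h1]; ring
    exact mul_left_cancel₀ (hapos k).ne' h2
  have hkeyν : ∀ k, ∫ ω in B, u k ω ∂ν = 2⁻¹ * ∫ ω, u k ω ∂ν := by
    intro k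
    have h1 : ∫ ω in B, v k ω ∂μ = ∫ ω in B, u k ω ∂ν := by
      show ∫ ω, S.indicator (u k) ω ∂(μ.restrict B) = ∫ ω, u k ω ∂(ν.restrict B)
      rw [integral_indicator hS, Measure.restrict_restrict hS, hν,
        Measure.restrict_restrict hB, Set.inter_comm]
    have h2 : ∫ ω, v k ω ∂μ = ∫ ω, u k ω ∂ν := by
      show ∫ ω, S.indicator (u k) ω ∂μ = _
      rw [integral_indicator hS]
    rw [← h1, ← h2]
    exact hkey k
  -- density argument
  set Z : Set (Lp ℝ 1 ν) :=
    {f | ∫ ω in B, (f : Ω → ℝ) ω ∂ν = 2⁻¹ * ∫ ω, (f : Ω → ℝ) ω ∂ν} with hZ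
  have hZc : IsClosed Z :=
    isClosed_eq (continuous_setIntegral B) (continuous_const.mul continuous_integral)
  have hZd : Dense Z := by
    apply (denseRange_denseSeq (Lp ℝ 1 ν)).mono
    rw [Set.range_subset_iff]
    intro n
    exact hkeyν n
  have hZall : ∀ f : Lp ℝ 1 ν, f ∈ Z := by
    intro f
    have := hZd.closure_eq
    rw [hZc.closure_eq] at this
    rw [this]
    trivial
  -- evaluate at the constant 1 and at the indicator of B
  have he1 := hZall ((integrable_const (1:ℝ)).toL1 _)
  have he2 := hZall (((integrable_const (1:ℝ)).indicator hB).toL1 _)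
  rw [hZ] at he1 he2
  simp only [Set.mem_setOf_eq] at he1 he2
  have hc1 : ∫ ω in B, (((integrable_const (1:ℝ)).toL1 _ : Lp ℝ 1 ν) : Ω → ℝ) ω ∂ν
      = (ν B).toReal := by
    rw [integral_congr_ae (ae_restrict_of_ae ((integrable_const (1:ℝ)).coeFn_toL1))]
    simp [setIntegral_const, Measure.real]
  have hc2 : ∫ ω, (((integrable_const (1:ℝ)).toL1 _ : Lp ℝ 1 ν) : Ω → ℝ) ω ∂ν
      = (ν Set.univ).toReal := by
    rw [integral_congr_ae ((integrable_const (1:ℝ)).coeFn_toL1)]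
    simp [Measure.real]
  have hd1 : ∫ ω in B, ((((integrable_const (1:ℝ)).indicator hB).toL1 _ : Lp ℝ 1 ν) : Ω → ℝ) ω ∂ν
      = (ν B).toReal := by
    rw [integral_congr_ae (ae_restrict_of_ae (((integrable_const (1:ℝ)).indicator hB).coeFn_toL1))]
    have heq : ∫ ω in B, (B.indicator (fun _ => (1:ℝ))) ω ∂ν = ∫ _ in B, (1:ℝ) ∂ν :=
      setIntegral_congr_fun hB (fun ω hω => by simp [Set.indicator_of_mem hω])
    rw [heq]
    simp [setIntegral_const, Measure.real]
  have hd2 : ∫ ω, ((((integrable_const (1:ℝ)).indicator hB).toL1 _ : Lp ℝ 1 ν) : Ω → ℝ) ω ∂ν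
      = (ν B).toReal := by
    rw [integral_congr_ae (((integrable_const (1:ℝ)).indicator hB).coeFn_toL1)]
    rw [integral_indicator_const (1:ℝ) hB]
    simp [Measure.real]
  rw [hc1, hc2] at he1
  rw [hd1, hd2] at he2
  have hB0 : (ν B).toReal = 0 := by linarith
  have hS0 : (ν Set.univ).toReal = 0 := by linarith
  rw [Measure.restrict_apply_univ] at hS0
  have := (ENNReal.toReal_eq_zero_iff _).mp hS0
  rcases this with h' | h'
  · exact absurd h' hSpos.ne'
  · exact absurd h' (measure_ne_top μ S)
end
end
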